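/- arXiv:1701.02445 — 8 statements merged into one kernel-verified Lean document; each statement's English description precedes it below -/
import Mathlib

section
/- Let L be a complete residuated lattice, Y ≠ ∅, and * an idempotent truth-stressing hedge (satisfying 1*=1, a* ≤ a, (a→b)* ≤ a*→b*, and a** = a*). An operator C : L^Y → L^Y is an L*-closure operator if and only if C is extensive (A ⊆ C(A)), isotone (A ⊆ B implies C(A) ⊆ C(B)), idempotent (C(C(A)) ⊆ C(A)), and satisfies C(a* → C(A)) ⊆ a* → C(A) for all a ∈ L and A ∈ L^Y. -/
/-!
An L*-closure operator is isotone because `A ⊆ B` means `S(A, B) = 1`, so `1 = 1* ≤ S(C(A), C(B))`.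
Since `a** = a*` and `a* ≤ S(a* → C(A), C(A))` by modus ponens, the defining inequality
gives `a* ≤ S(C(a* → C(A)), C(C(A))) ≤ S(C(a* → C(A)), C(A))`, which is the fourth condition.
Conversely, for `s = S(A, B)*` we have `s ≤ S(A, B)`, hence `A ⊆ s → C(B)`; isotony and the
fourth condition (with `a = S(A, B)`) give `C(A) ⊆ C(s → C(B)) ⊆ s → C(B)`, i.e. `s ≤ S(C(A), C(B))`.
-/

section Residuation

variable {L : Type*} [PartialOrder L] {mul arr : L → L → L}

theorem mul_arr_le (hadj : ∀ a b c : L, mul a b ≤ c ↔ b ≤ arr a c) (a b : L) :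
    mul a (arr a b) ≤ b :=
  (hadj a _ b).mpr le_rfl

theorem arr_mono_right (hadj : ∀ a b c : L, mul a b ≤ c ↔ b ≤ arr a c) (a : L) {b c : L}
    (hbc : b ≤ c) : arr a b ≤ arr a c :=
  (hadj a _ c).mp ((mul_arr_le hadj a b).trans hbc)

theorem le_arr_comm (hadj : ∀ a b c : L, mul a b ≤ c ↔ b ≤ arr a c)
    (hcomm : ∀ a b : L, mul a b = mul b a) {a b c : L} : b ≤ arr a c ↔ a ≤ arr b c := by
  rw [← hadj, ← hadj, hcomm]

theorem top_le_arr_iff [OrderTop L] (hadj : ∀ a b c : L, mul a b ≤ c ↔ b ≤ arr a c)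
    (hunit : ∀ a : L, mul a ⊤ = a) {a b : L} : ⊤ ≤ arr a b ↔ a ≤ b := by
  rw [← hadj, hunit]

theorem hedge_mono [OrderTop L] (hadj : ∀ a b c : L, mul a b ≤ c ↔ b ≤ arr a c)
    (hunit : ∀ a : L, mul a ⊤ = a) {star : L → L} (hs1 : star ⊤ = ⊤)
    (hs3 : ∀ a b : L, star (arr a b) ≤ arr (star a) (star b)) : Monotone star := by
  intro a b hab
  have harr : arr a b = ⊤ := top_unique ((top_le_arr_iff hadj hunit).mpr hab)
  have := hs3 a b
  rw [harr, hs1] at this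
  exact (top_le_arr_iff hadj hunit).mp this

end Residuation

section Subsethood

variable {L Y : Type*} [CompleteLattice L] {mul arr : L → L → L}

theorem le_iInf_arr_iff (hadj : ∀ a b c : L, mul a b ≤ c ↔ b ≤ arr a c)
    (hcomm : ∀ a b : L, mul a b = mul b a) {s : L} {A B : Y → L} :
    s ≤ ⨅ y, arr (A y) (B y) ↔ A ≤ fun y => arr s (B y) := by
  simp only [le_iInf_iff, le_arr_comm hadj hcomm, Pi.le_def]

theorem top_le_iInf_arr_iff (hadj : ∀ a b c : L, mul a b ≤ c ↔ b ≤ arr a c)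
    (hunit : ∀ a : L, mul a ⊤ = a) {A B : Y → L} :
    ⊤ ≤ ⨅ y, arr (A y) (B y) ↔ A ≤ B := by
  simp only [le_iInf_iff, top_le_arr_iff hadj hunit, Pi.le_def]

variable {star : L → L} {C : (Y → L) → (Y → L)}

theorem monotone_of_hedge_iInf_arr_le (hadj : ∀ a b c : L, mul a b ≤ c ↔ b ≤ arr a c)
    (hunit : ∀ a : L, mul a ⊤ = a) (hs1 : star ⊤ = ⊤)
    (hs3 : ∀ a b : L, star (arr a b) ≤ arr (star a) (star b))
    (hC : ∀ A B : Y → L, star (⨅ y, arr (A y) (B y)) ≤ ⨅ y, arr (C A y) (C B y)) :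
    Monotone C := by
  intro A B hAB
  rw [← top_le_iInf_arr_iff hadj hunit] at hAB ⊢
  calc ⊤ = star ⊤ := hs1.symm
    _ ≤ star (⨅ y, arr (A y) (B y)) := hedge_mono hadj hunit hs1 hs3 hAB
    _ ≤ _ := hC A B

theorem closure_arr_le_of_hedge_iInf_arr_le (hadj : ∀ a b c : L, mul a b ≤ c ↔ b ≤ arr a c)
    (hcomm : ∀ a b : L, mul a b = mul b a) (hunit : ∀ a : L, mul a ⊤ = a) (hs1 : star ⊤ = ⊤)
    (hs3 : ∀ a b : L, star (arr a b) ≤ arr (star a) (star b))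
    (hs4 : ∀ a : L, star (star a) = star a)
    (hC : ∀ A B : Y → L, star (⨅ y, arr (A y) (B y)) ≤ ⨅ y, arr (C A y) (C B y))
    (hidem : ∀ A, C (C A) ≤ C A) (a : L) (A : Y → L) :
    C (fun y => arr (star a) (C A y)) ≤ fun y => arr (star a) (C A y) := by
  have modus_ponens : star a ≤ ⨅ y, arr (arr (star a) (C A y)) (C A y) :=
    (le_iInf_arr_iff hadj hcomm).mpr fun _ => le_rfl
  rw [← le_iInf_arr_iff hadj hcomm]
  calc star a = star (star a) := (hs4 a).symm
    _ ≤ star (⨅ y, arr (arr (star a) (C A y)) (C A y)) :=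
        hedge_mono hadj hunit hs1 hs3 modus_ponens
    _ ≤ ⨅ y, arr (C (fun y => arr (star a) (C A y)) y) (C (C A) y) := hC _ _
    _ ≤ _ := iInf_mono fun y => arr_mono_right hadj _ (hidem A y)

theorem hedge_iInf_arr_le_of_closure_arr_le (hadj : ∀ a b c : L, mul a b ≤ c ↔ b ≤ arr a c)
    (hcomm : ∀ a b : L, mul a b = mul b a) (hs2 : ∀ a : L, star a ≤ a)
    (hext : ∀ A, A ≤ C A) (hmono : Monotone C)
    (harr : ∀ (a : L) (A : Y → L),
      C (fun y => arr (star a) (C A y)) ≤ fun y => arr (star a) (C A y))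
    (A B : Y → L) : star (⨅ y, arr (A y) (B y)) ≤ ⨅ y, arr (C A y) (C B y) := by
  set s := ⨅ y, arr (A y) (B y)
  have hA : A ≤ fun y => arr (star s) (C B y) :=
    ((le_iInf_arr_iff hadj hcomm).mp (hs2 s)).trans fun y => arr_mono_right hadj _ (hext B y)
  exact (le_iInf_arr_iff hadj hcomm).mpr ((hmono hA).trans (harr s B))

end Subsethood

theorem Lstar_closure_char_general {L : Type*} [CompleteLattice L]
    (mul arr : L → L → L) (star : L → L)
    (hcomm : ∀ a b : L, mul a b = mul b a)
    (hone : ∀ a : L, mul ⊤ a = a)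
    (hadj : ∀ a b c : L, mul a b ≤ c ↔ b ≤ arr a c)
    (hs1 : star ⊤ = ⊤)
    (hs2 : ∀ a : L, star a ≤ a)
    (hs3 : ∀ a b : L, star (arr a b) ≤ arr (star a) (star b))
    (hs4 : ∀ a : L, star (star a) = star a)
    {Y : Type*} (C : (Y → L) → (Y → L)) :
    ((∀ A, A ≤ C A) ∧
     (∀ A B : Y → L,
       star (⨅ y, arr (A y) (B y)) ≤ ⨅ y, arr (C A y) (C B y)) ∧
     (∀ A, C (C A) ≤ C A)) ↔
    ((∀ A, A ≤ C A) ∧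
     (∀ A B : Y → L, A ≤ B → C A ≤ C B) ∧
     (∀ A, C (C A) ≤ C A) ∧
     (∀ (a : L) (A : Y → L),
       C (fun y => arr (star a) (C A y)) ≤ fun y => arr (star a) (C A y))) := by
  have hunit : ∀ a : L, mul a ⊤ = a := fun a => (hcomm a ⊤).trans (hone a)
  constructor
  · rintro ⟨hext, hC, hidem⟩
    exact ⟨hext, monotone_of_hedge_iInf_arr_le hadj hunit hs1 hs3 hC, hidem,
      closure_arr_le_of_hedge_iInf_arr_le hadj hcomm hunit hs1 hs3 hs4 hC hidem⟩
  · rintro ⟨hext, hmono, hidem, harr⟩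
    exact ⟨hext, hedge_iInf_arr_le_of_closure_arr_le hadj hcomm hs2 hext hmono harr, hidem⟩

/-- Characterization of L*-closure operators for an idempotent
truth-stressing hedge. -/
theorem Lstar_closure_char {L : Type*} [CompleteLattice L]
    (mul arr : L → L → L) (star : L → L)
    (hassoc : ∀ a b c : L, mul (mul a b) c = mul a (mul b c))
    (hcomm : ∀ a b : L, mul a b = mul b a)
    (hone : ∀ a : L, mul ⊤ a = a)
    (hadj : ∀ a b c : L, mul a b ≤ c ↔ b ≤ arr a c)
    (hs1 : star ⊤ = ⊤)
    (hs2 : ∀ a : L, star a ≤ a)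
    (hs3 : ∀ a b : L, star (arr a b) ≤ arr (star a) (star b))
    (hs4 : ∀ a : L, star (star a) = star a)
    {Y : Type*} [Nonempty Y] (C : (Y → L) → (Y → L)) :
    ((∀ A, A ≤ C A) ∧
     (∀ A B : Y → L,
       star (⨅ y, arr (A y) (B y)) ≤ ⨅ y, arr (C A y) (C B y)) ∧
     (∀ A, C (C A) ≤ C A)) ↔
    ((∀ A, A ≤ C A) ∧
     (∀ A B : Y → L, A ≤ B → C A ≤ C B) ∧
     (∀ A, C (C A) ≤ C A) ∧
     (∀ (a : L) (A : Y → L),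
       C (fun y => arr (star a) (C A y)) ≤ fun y => arr (star a) (C A y))) :=
  Lstar_closure_char_general mul arr star hcomm hone hadj hs1 hs2 hs3 hs4 C
end

section
/- Let L be a complete lattice and S an L-parameterization (a set of isotone Galois connections in L containing the identity pair ⟨id, id⟩). An operator C : L → L is an S-closure operator if and only if C is extensive (a ≤ C(a)) and satisfies: for all a, b ∈ L and ⟨f, g⟩ ∈ S, a ≤ g(C(b)) implies C(a) ≤ g(C(b)). -/
theorem Sclosure_iff_mon_idm_general {L : Type*} [CompleteLattice L]
    (S : Set ((L → L) × (L → L)))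
    (hid : ((id : L → L), (id : L → L)) ∈ S)
    (C : L → L) :
    ((∀ a, a ≤ C a) ∧
     (∀ a b : L, a ≤ b → C a ≤ C b) ∧
     (∀ a : L, ∀ p ∈ S, C (p.2 (C a)) ≤ p.2 (C a))) ↔
    ((∀ a, a ≤ C a) ∧
     (∀ a b : L, ∀ p ∈ S, a ≤ p.2 (C b) → C a ≤ p.2 (C b))) := by
  constructor
  · rintro ⟨le_C, C_mono, C_idem⟩
    exact ⟨le_C, fun a b p hp hab => (C_mono _ _ hab).trans (C_idem b p hp)⟩
  · rintro ⟨le_C, C_le⟩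
    refine ⟨le_C, fun a b hab => ?_, fun a p hp => C_le _ a p hp le_rfl⟩
    exact C_le a b _ hid (hab.trans (le_C b))

/-- An operator is an S-closure operator iff it is extensive and satisfies
the combined monotony-idempotency condition. -/
theorem Sclosure_iff_mon_idm {L : Type*} [CompleteLattice L]
    (S : Set ((L → L) × (L → L)))
    (hS : ∀ p ∈ S, ∀ a b : L, p.1 a ≤ b ↔ a ≤ p.2 b)
    (hid : ((id : L → L), (id : L → L)) ∈ S)
    (C : L → L) :
    ((∀ a, a ≤ C a) ∧
     (∀ a b : L, a ≤ b → C a ≤ C b) ∧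
     (∀ a : L, ∀ p ∈ S, C (p.2 (C a)) ≤ p.2 (C a))) ↔
    ((∀ a, a ≤ C a) ∧
     (∀ a b : L, ∀ p ∈ S, a ≤ p.2 (C b) → C a ≤ p.2 (C b))) :=
  Sclosure_iff_mon_idm_general S hid C
end

section
/- Let L be a complete lattice and S an L-parameterization. An operator C : L → L is an S-closure operator if and only if C is extensive (a ≤ C(a)), satisfies C(C(a)) ≤ C(a), and for all a, b ∈ L and ⟨f, g⟩ ∈ S, a ≤ g(b) implies C(a) ≤ g(C(b)). -/
section

variable {L : Type*} [Preorder L] {C g : L → L}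

theorem closure_le_map_closure_of_le_map (hext : ∀ a, a ≤ C a) (hmon : Monotone C)
    (hg : Monotone g) (hcl : ∀ a, C (g (C a)) ≤ g (C a)) {a b : L} (h : a ≤ g b) :
    C a ≤ g (C b) :=
  (hmon (h.trans (hg (hext b)))).trans (hcl b)

theorem closure_map_closure_le_map_closure (hg : Monotone g) (hidem : ∀ a, C (C a) ≤ C a)
    (halt : ∀ a b, a ≤ g b → C a ≤ g (C b)) (a : L) : C (g (C a)) ≤ g (C a) :=
  (halt _ _ le_rfl).trans (hg (hidem a))

end

/-- An operator is an S-closure operator iff it is extensive, idempotent,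
and satisfies the alternative monotony condition. -/
theorem Sclosure_iff_mon_alt {L : Type*} [CompleteLattice L]
    (S : Set ((L → L) × (L → L)))
    (hS : ∀ p ∈ S, ∀ a b : L, p.1 a ≤ b ↔ a ≤ p.2 b)
    (hid : ((id : L → L), (id : L → L)) ∈ S)
    (C : L → L) :
    ((∀ a, a ≤ C a) ∧
     (∀ a b : L, a ≤ b → C a ≤ C b) ∧
     (∀ a : L, ∀ p ∈ S, C (p.2 (C a)) ≤ p.2 (C a))) ↔
    ((∀ a, a ≤ C a) ∧
     (∀ a, C (C a) ≤ C a) ∧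
     (∀ a b : L, ∀ p ∈ S, a ≤ p.2 b → C a ≤ p.2 (C b))) := by
  have upper_monotone : ∀ p ∈ S, Monotone p.2 := fun p hp =>
    GaloisConnection.monotone_u (hS p hp)
  constructor
  · rintro ⟨hext, hmon, hcl⟩
    exact ⟨hext, fun a => hcl a _ hid, fun a b p hp =>
      closure_le_map_closure_of_le_map hext (fun _ _ => hmon _ _) (upper_monotone p hp)
        (hcl · p hp)⟩
  · rintro ⟨hext, hidem, halt⟩
    exact ⟨hext, fun a b => halt a b _ hid, fun a p hp =>
      closure_map_closure_le_map_closure (upper_monotone p hp) hidem (halt · · p hp) a⟩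
end

section
/- Let C : L → L be an ordinary closure operator in a complete lattice L (extensive, isotone, idempotent) and S an L-parameterization. Then the following are equivalent: (1) C is an S-closure operator; (2) f(C(a)) ≤ C(f(a)) for all a ∈ L and ⟨f,g⟩ ∈ S; (3) C(g(a)) ≤ g(C(a)) for all a ∈ L and ⟨f,g⟩ ∈ S. -/
namespace GaloisConnection

variable {α : Type*} [Preorder α] {f g C : α → α}

theorem map_closure_le_closure_map (gc : GaloisConnection f g) (hext : ∀ a, a ≤ C a)
    (hC : Monotone C) (h : ∀ a, C (g (C a)) ≤ g (C a)) (a : α) : f (C a) ≤ C (f a) :=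
  gc.l_le <| calc
    C a ≤ C (g (C (f a))) := hC <| gc.le_u <| hext (f a)
    _ ≤ g (C (f a)) := h (f a)

theorem closure_u_le_u_closure (gc : GaloisConnection f g) (hC : Monotone C)
    (h : ∀ a, f (C a) ≤ C (f a)) (a : α) : C (g a) ≤ g (C a) :=
  gc.le_u <| calc
    f (C (g a)) ≤ C (f (g a)) := h (g a)
    _ ≤ C a := hC <| gc.l_u_le a

theorem closure_u_closure_le (gc : GaloisConnection f g) (hidm : ∀ a, C (C a) ≤ C a)
    (h : ∀ a, C (g a) ≤ g (C a)) (a : α) : C (g (C a)) ≤ g (C a) :=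
  (h (C a)).trans <| gc.monotone_u <| hidm a

end GaloisConnection

theorem Sclosure_tfae_general {L : Type*} [CompleteLattice L]
    (S : Set ((L → L) × (L → L)))
    (hS : ∀ p ∈ S, ∀ a b : L, p.1 a ≤ b ↔ a ≤ p.2 b)
    (C : L → L)
    (hext : ∀ a, a ≤ C a)
    (hmon : ∀ a b : L, a ≤ b → C a ≤ C b)
    (hidm : ∀ a, C (C a) ≤ C a) :
    ((∀ a : L, ∀ p ∈ S, C (p.2 (C a)) ≤ p.2 (C a)) ↔
      (∀ a : L, ∀ p ∈ S, p.1 (C a) ≤ C (p.1 a))) ∧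
    ((∀ a : L, ∀ p ∈ S, C (p.2 (C a)) ≤ p.2 (C a)) ↔
      (∀ a : L, ∀ p ∈ S, C (p.2 a) ≤ p.2 (C a))) := by
  have gc : ∀ p ∈ S, GaloisConnection p.1 p.2 := hS
  have hC : Monotone C := fun a b => hmon a b
  have h12 (h : ∀ a : L, ∀ p ∈ S, C (p.2 (C a)) ≤ p.2 (C a)) (a : L) (p) (hp : p ∈ S) :=
    (gc p hp).map_closure_le_closure_map hext hC (h · p hp) a
  have h23 (h : ∀ a : L, ∀ p ∈ S, p.1 (C a) ≤ C (p.1 a)) (a : L) (p) (hp : p ∈ S) :=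
    (gc p hp).closure_u_le_u_closure hC (h · p hp) a
  have h31 (h : ∀ a : L, ∀ p ∈ S, C (p.2 a) ≤ p.2 (C a)) (a : L) (p) (hp : p ∈ S) :=
    (gc p hp).closure_u_closure_le hidm (h · p hp) a
  exact ⟨⟨h12, fun h => h31 (h23 h)⟩, ⟨fun h => h23 (h12 h), h31⟩⟩

/-- For an ordinary closure operator, being an S-closure operator is
equivalent to either of the adjoint-exchange inequalities. -/
theorem Sclosure_tfae {L : Type*} [CompleteLattice L]
    (S : Set ((L → L) × (L → L)))
    (hS : ∀ p ∈ S, ∀ a b : L, p.1 a ≤ b ↔ a ≤ p.2 b)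
    (hid : ((id : L → L), (id : L → L)) ∈ S)
    (C : L → L)
    (hext : ∀ a, a ≤ C a)
    (hmon : ∀ a b : L, a ≤ b → C a ≤ C b)
    (hidm : ∀ a, C (C a) ≤ C a) :
    ((∀ a : L, ∀ p ∈ S, C (p.2 (C a)) ≤ p.2 (C a)) ↔
      (∀ a : L, ∀ p ∈ S, p.1 (C a) ≤ C (p.1 a))) ∧
    ((∀ a : L, ∀ p ∈ S, C (p.2 (C a)) ≤ p.2 (C a)) ↔
      (∀ a : L, ∀ p ∈ S, C (p.2 a) ≤ p.2 (C a))) :=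
  Sclosure_tfae_general S hS C hext hmon hidm
end

section
/- Let C : L → L be an operator on a complete lattice L satisfying a ≤ C(a) and C(C(a)) ≤ C(a). Then C is an S-closure operator if and only if for all a, b ∈ L and ⟨f,g⟩ ∈ S, a ≤ b implies f(C(a)) ≤ C(f(b)), and also if and only if for all a, b ∈ L and ⟨f,g⟩ ∈ S, a ≤ b implies C(g(a)) ≤ g(C(b)). -/
/-!
With ⟨id, id⟩ ∈ S, either generalized isotony specializes to ordinary isotony of `C`; at `a = b`
together with `C (C a) ≤ C a` it gives `C (g (C a)) ≤ g (C a)`. Conversely, that stability and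
isotony of `C` yield both conditions, using `a ≤ g (f a)` and the adjunction `f ⊣ g` to move `f`
across the inequality.
-/

section ClosureIsotony

variable {L : Type*} [Preorder L] {C f g : L → L}

theorem GaloisConnection.l_closure_le_closure_l (gc : GaloisConnection f g)
    (hext : ∀ a, a ≤ C a) (hmono : Monotone C) (hcl : ∀ a, C (g (C a)) ≤ g (C a))
    {a b : L} (hab : a ≤ b) : f (C a) ≤ C (f b) :=
  gc.l_le <| calc
    C a ≤ C (g (C (f b))) := hmono <| hab.trans <| (gc.le_u_l b).trans <| gc.monotone_u (hext _)
    _ ≤ g (C (f b)) := hcl _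

theorem Monotone.closure_comp_le_comp_closure (hg : Monotone g)
    (hext : ∀ a, a ≤ C a) (hmono : Monotone C) (hcl : ∀ a, C (g (C a)) ≤ g (C a))
    {a b : L} (hab : a ≤ b) : C (g a) ≤ g (C b) :=
  (hmono (hg (hab.trans (hext b)))).trans (hcl b)

theorem GaloisConnection.closure_u_closure_le_of_l_closure_le (gc : GaloisConnection f g)
    (hmono : Monotone C) (hidm : ∀ a, C (C a) ≤ C a)
    (h : ∀ a b, a ≤ b → f (C a) ≤ C (f b)) (a : L) : C (g (C a)) ≤ g (C a) :=
  gc.le_u <| calc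
    f (C (g (C a))) ≤ C (f (g (C a))) := h _ _ le_rfl
    _ ≤ C (C a) := hmono (gc.l_u_le _)
    _ ≤ C a := hidm a

theorem Monotone.closure_comp_closure_le_of_closure_comp_le (hg : Monotone g)
    (hidm : ∀ a, C (C a) ≤ C a) (h : ∀ a b, a ≤ b → C (g a) ≤ g (C b)) (a : L) :
    C (g (C a)) ≤ g (C a) :=
  (h _ _ le_rfl).trans (hg (hidm a))

end ClosureIsotony

/-- For an extensive operator with C(C a) ≤ C a, being an S-closure operator
is equivalent to either of the generalized isotony conditions. -/
theorem Sclosure_iff_gen_isotony {L : Type*} [CompleteLattice L]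
    (S : Set ((L → L) × (L → L)))
    (hS : ∀ p ∈ S, ∀ a b : L, p.1 a ≤ b ↔ a ≤ p.2 b)
    (hid : ((id : L → L), (id : L → L)) ∈ S)
    (C : L → L)
    (hext : ∀ a, a ≤ C a)
    (hidm : ∀ a, C (C a) ≤ C a) :
    (((∀ a, a ≤ C a) ∧
      (∀ a b : L, a ≤ b → C a ≤ C b) ∧
      (∀ a : L, ∀ p ∈ S, C (p.2 (C a)) ≤ p.2 (C a))) ↔
      (∀ a b : L, ∀ p ∈ S, a ≤ b → p.1 (C a) ≤ C (p.1 b))) ∧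
    (((∀ a, a ≤ C a) ∧
      (∀ a b : L, a ≤ b → C a ≤ C b) ∧
      (∀ a : L, ∀ p ∈ S, C (p.2 (C a)) ≤ p.2 (C a))) ↔
      (∀ a b : L, ∀ p ∈ S, a ≤ b → C (p.2 a) ≤ p.2 (C b))) := by
  have gc : ∀ p ∈ S, GaloisConnection p.1 p.2 := hS
  refine ⟨⟨?_, fun h => ?_⟩, ⟨?_, fun h => ?_⟩⟩
  · rintro ⟨-, hmono, hcl⟩ a b p hp hab
    exact (gc p hp).l_closure_le_closure_l hext hmono (hcl · p hp) hab
  · have hmono : Monotone C := fun a b hab => h a b _ hid hab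
    exact ⟨hext, hmono, fun a p hp =>
      (gc p hp).closure_u_closure_le_of_l_closure_le hmono hidm (h · · p hp) a⟩
  · rintro ⟨-, hmono, hcl⟩ a b p hp hab
    exact (gc p hp).monotone_u.closure_comp_le_comp_closure hext hmono (hcl · p hp) hab
  · have hmono : Monotone C := fun a b hab => h a b _ hid hab
    exact ⟨hext, hmono, fun a p hp =>
      (gc p hp).monotone_u.closure_comp_closure_le_of_closure_comp_le hidm (h · · p hp) a⟩
end

section
/- A subset 𝒮 of a complete lattice L is an S-closure system (closed under arbitrary infima and closed under applications of every upper adjoint g with ⟨f,g⟩ ∈ S) if and only if for every a ∈ L, the element ⋀{g(b) : b ∈ 𝒮, ⟨f,g⟩ ∈ S, a ≤ g(b)} belongs to 𝒮. -/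
/-! The infimum of the elements `g b` (`b ∈ 𝒮`, `⟨f, g⟩ ∈ S`) lying above `a` is always above `a`.
For `a = ⋀ T` with `T ⊆ 𝒮` (using `⟨id, id⟩ ∈ S`) and for `a = g b` with `b ∈ 𝒮`, the element `a`
is itself a lower bound of these elements, so the infimum collapses to `a`, and the single condition
puts `a` in `𝒮`. -/

section

variable {L : Type*} [CompleteLattice L] {S : Set ((L → L) × (L → L))} {𝒮 : Set L} {a : L}

variable (S 𝒮) in
def adjointImagesAbove (a : L) : Set L :=
  {x : L | ∃ p ∈ S, ∃ b ∈ 𝒮, x = p.2 b ∧ a ≤ p.2 b}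

lemma mem_adjointImagesAbove {p : (L → L) × (L → L)} {b : L} (hp : p ∈ S) (hb : b ∈ 𝒮)
    (hab : a ≤ p.2 b) : p.2 b ∈ adjointImagesAbove S 𝒮 a :=
  ⟨p, hp, b, hb, rfl, hab⟩

lemma mem_adjointImagesAbove_of_id_mem {b : L} (hid : ((id : L → L), (id : L → L)) ∈ S)
    (hb : b ∈ 𝒮) (hab : a ≤ b) : b ∈ adjointImagesAbove S 𝒮 a :=
  mem_adjointImagesAbove (p := (id, id)) hid hb hab

lemma adjointImagesAbove_subset (hg : ∀ b ∈ 𝒮, ∀ p ∈ S, p.2 b ∈ 𝒮) :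
    adjointImagesAbove S 𝒮 a ⊆ 𝒮 := by
  rintro _ ⟨p, hp, b, hb, rfl, -⟩
  exact hg b hb p hp

lemma le_sInf_adjointImagesAbove : a ≤ sInf (adjointImagesAbove S 𝒮 a) :=
  le_sInf fun _ ⟨_, _, _, _, hx, hax⟩ => hx ▸ hax

lemma sInf_adjointImagesAbove_eq_of_le (h : sInf (adjointImagesAbove S 𝒮 a) ≤ a) :
    sInf (adjointImagesAbove S 𝒮 a) = a :=
  le_antisymm h le_sInf_adjointImagesAbove

end

theorem Ssystem_char_general {L : Type*} [CompleteLattice L]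
    (S : Set ((L → L) × (L → L)))
    (hid : ((id : L → L), (id : L → L)) ∈ S)
    (𝒮 : Set L) :
    ((∀ T ⊆ 𝒮, sInf T ∈ 𝒮) ∧ (∀ a ∈ 𝒮, ∀ p ∈ S, p.2 a ∈ 𝒮)) ↔
    (∀ a : L,
      sInf {x : L | ∃ p ∈ S, ∃ b ∈ 𝒮, x = p.2 b ∧ a ≤ p.2 b} ∈ 𝒮) := by
  refine ⟨fun ⟨hinf, hg⟩ a => hinf _ (adjointImagesAbove_subset hg), fun H => ⟨?_, ?_⟩⟩
  · intro T hT
    have hT_eq : sInf (adjointImagesAbove S 𝒮 (sInf T)) = sInf T :=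
      sInf_adjointImagesAbove_eq_of_le <| le_sInf fun t ht =>
        sInf_le (mem_adjointImagesAbove_of_id_mem hid (hT ht) (sInf_le ht))
    exact hT_eq ▸ H (sInf T)
  · intro b hb p hp
    have hpb_eq : sInf (adjointImagesAbove S 𝒮 (p.2 b)) = p.2 b :=
      sInf_adjointImagesAbove_eq_of_le (sInf_le (mem_adjointImagesAbove hp hb le_rfl))
    exact hpb_eq ▸ H (p.2 b)

/-- Characterization of S-closure systems by a single condition. -/
theorem Ssystem_char {L : Type*} [CompleteLattice L]
    (S : Set ((L → L) × (L → L)))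
    (hS : ∀ p ∈ S, ∀ a b : L, p.1 a ≤ b ↔ a ≤ p.2 b)
    (hid : ((id : L → L), (id : L → L)) ∈ S)
    (𝒮 : Set L) :
    ((∀ T ⊆ 𝒮, sInf T ∈ 𝒮) ∧ (∀ a ∈ 𝒮, ∀ p ∈ S, p.2 a ∈ 𝒮)) ↔
    (∀ a : L,
      sInf {x : L | ∃ p ∈ S, ∃ b ∈ 𝒮, x = p.2 b ∧ a ≤ p.2 b} ∈ 𝒮) :=
  Ssystem_char_general S hid 𝒮
end

section
/- If C is an S-closure operator on a complete lattice L, then the set of its fixed points 𝒮_C = {a ∈ L : C(a) = a} is an S-closure system; conversely, if 𝒮 is an S-closure system, then C_𝒮(a) = ⋀{b ∈ 𝒮 : a ≤ b} is an S-closure operator, and these constructions are mutually inverse: 𝒮 = 𝒮_{C_𝒮} and C = C_{𝒮_C}. -/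
/-!
Fixed points of an extensive monotone map are closed under infima, and a set closed under
infima is the fixed-point set of `a ↦ ⋀ {b ∈ 𝒮 | a ≤ b}`. The conditions involving `S` match
up: for an S-closure operator `C`, `C (g (C a)) ≤ g (C a) ≤ C (g (C a))` makes `g (C a)` a fixed
point, and conversely `C_𝒮 a ∈ 𝒮` gives `g (C_𝒮 a) ∈ 𝒮`. The pair `(id, id) ∈ S` makes `C`
idempotent, which is what `C = C_{𝒮_C}` needs.
-/

/-- C is an S-closure operator. -/
def SClos {L : Type*} [CompleteLattice L]
    (S : Set ((L → L) × (L → L))) (C : L → L) : Prop :=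
  (∀ a, a ≤ C a) ∧
  (∀ a b : L, a ≤ b → C a ≤ C b) ∧
  (∀ a : L, ∀ p ∈ S, C (p.2 (C a)) ≤ p.2 (C a))

/-- 𝒮 is an S-closure system. -/
def SSys {L : Type*} [CompleteLattice L]
    (S : Set ((L → L) × (L → L))) (𝒮 : Set L) : Prop :=
  (∀ T ⊆ 𝒮, sInf T ∈ 𝒮) ∧ (∀ a ∈ 𝒮, ∀ p ∈ S, p.2 a ∈ 𝒮)

section

variable {L : Type*} [CompleteLattice L]

theorem le_sInf_sep_le (𝒮 : Set L) (a : L) : a ≤ sInf {b ∈ 𝒮 | a ≤ b} :=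
  le_sInf fun _ hb => hb.2

theorem monotone_sInf_sep_le (𝒮 : Set L) : Monotone fun a => sInf {b ∈ 𝒮 | a ≤ b} :=
  fun _ _ hab => le_sInf fun _ hc => sInf_le ⟨hc.1, hab.trans hc.2⟩

theorem sInf_sep_le_eq_of_mem {𝒮 : Set L} {a : L} (ha : a ∈ 𝒮) : sInf {b ∈ 𝒮 | a ≤ b} = a :=
  le_antisymm (sInf_le ⟨ha, le_rfl⟩) (le_sInf_sep_le 𝒮 a)

theorem apply_sInf_eq_of_subset_fixedPoints {C : L → L} (hext : ∀ a, a ≤ C a)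
    (hmono : Monotone C) {T : Set L} (hT : T ⊆ {a | C a = a}) : C (sInf T) = sInf T :=
  le_antisymm (le_sInf fun _ ht => (hmono (sInf_le ht)).trans_eq (hT ht)) (hext _)

theorem sInf_sep_le_fixedPoints_eq {C : L → L} (hext : ∀ a, a ≤ C a) (hmono : Monotone C)
    (hidem : ∀ a, C (C a) = C a) (a : L) : sInf {b ∈ {x | C x = x} | a ≤ b} = C a :=
  le_antisymm (sInf_le ⟨hidem a, hext a⟩)
    (le_sInf fun _ hb => (hmono hb.2).trans_eq hb.1)

variable {S : Set ((L → L) × (L → L))}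

namespace SClos

variable {C : L → L} (hC : SClos S C)
include hC

theorem le_apply (a : L) : a ≤ C a := hC.1 a

theorem monotone : Monotone C := fun a b hab => hC.2.1 a b hab

theorem apply_apply (hid : ((id : L → L), (id : L → L)) ∈ S) (a : L) : C (C a) = C a :=
  le_antisymm (hC.2.2 a _ hid) (hC.le_apply _)

theorem sSys_fixedPoints : SSys S {a | C a = a} := by
  refine ⟨fun T hT => apply_sInf_eq_of_subset_fixedPoints hC.le_apply hC.monotone hT, ?_⟩
  intro a ha p hp
  have hfix : C (p.2 a) ≤ p.2 a := by
    have := hC.2.2 a p hp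
    rwa [show C a = a from ha] at this
  exact le_antisymm hfix (hC.le_apply _)

theorem sInf_sep_le_fixedPoints_eq (hid : ((id : L → L), (id : L → L)) ∈ S) (a : L) :
    sInf {b ∈ {x | C x = x} | a ≤ b} = C a :=
  _root_.sInf_sep_le_fixedPoints_eq hC.le_apply hC.monotone (hC.apply_apply hid) a

end SClos

namespace SSys

variable {𝒮 : Set L} (h𝒮 : SSys S 𝒮)
include h𝒮

theorem sInf_sep_le_mem (a : L) : sInf {b ∈ 𝒮 | a ≤ b} ∈ 𝒮 :=
  h𝒮.1 _ fun _ hb => hb.1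

theorem sClos_sInf_sep_le : SClos S fun a => sInf {b ∈ 𝒮 | a ≤ b} := by
  refine ⟨le_sInf_sep_le 𝒮, fun a b hab => monotone_sInf_sep_le 𝒮 hab, fun a p hp => ?_⟩
  exact (sInf_sep_le_eq_of_mem (h𝒮.2 _ (h𝒮.sInf_sep_le_mem a) p hp)).le

theorem setOf_sInf_sep_le_eq : {a : L | sInf {b ∈ 𝒮 | a ≤ b} = a} = 𝒮 :=
  Set.ext fun a => ⟨fun ha => (show sInf {b ∈ 𝒮 | a ≤ b} = a from ha) ▸ h𝒮.sInf_sep_le_mem a,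
    sInf_sep_le_eq_of_mem⟩

end SSys

end

theorem Sclosure_Ssystem_correspondence_general {L : Type*} [CompleteLattice L]
    (S : Set ((L → L) × (L → L)))
    (hid : ((id : L → L), (id : L → L)) ∈ S) :
    (∀ C : L → L, SClos S C → SSys S {a : L | C a = a}) ∧
    (∀ 𝒮 : Set L, SSys S 𝒮 → SClos S (fun a => sInf {b ∈ 𝒮 | a ≤ b})) ∧
    (∀ 𝒮 : Set L, SSys S 𝒮 →
      {a : L | sInf {b ∈ 𝒮 | a ≤ b} = a} = 𝒮) ∧
    (∀ C : L → L, SClos S C →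
      ∀ a : L, sInf {b ∈ {x : L | C x = x} | a ≤ b} = C a) :=
  ⟨fun _ hC => hC.sSys_fixedPoints, fun _ h𝒮 => h𝒮.sClos_sInf_sep_le,
    fun _ h𝒮 => h𝒮.setOf_sInf_sep_le_eq, fun _ hC => hC.sInf_sep_le_fixedPoints_eq hid⟩

/-- S-closure operators and S-closure systems are in mutually inverse
correspondence via fixed points and infima. -/
theorem Sclosure_Ssystem_correspondence {L : Type*} [CompleteLattice L]
    (S : Set ((L → L) × (L → L)))
    (hS : ∀ p ∈ S, ∀ a b : L, p.1 a ≤ b ↔ a ≤ p.2 b)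
    (hid : ((id : L → L), (id : L → L)) ∈ S) :
    (∀ C : L → L, SClos S C → SSys S {a : L | C a = a}) ∧
    (∀ 𝒮 : Set L, SSys S 𝒮 → SClos S (fun a => sInf {b ∈ 𝒮 | a ≤ b})) ∧
    (∀ 𝒮 : Set L, SSys S 𝒮 →
      {a : L | sInf {b ∈ 𝒮 | a ≤ b} = a} = 𝒮) ∧
    (∀ C : L → L, SClos S C →
      ∀ a : L, sInf {b ∈ {x : L | C x = x} | a ≤ b} = C a) :=
  Sclosure_Ssystem_correspondence_general S hid
end

section
/- Let L be a complete residuated lattice and * an idempotent truth-stressing hedge on L (satisfying 1*=1, a* ≤ a, (a→b)* ≤ a*→b*, a**=a*). For a,b ∈ L let c = a* ⊗ b*. Then a* ⊗ b* = (a* ⊗ b*)*, and consequently the set S = {⟨x ↦ a*⊗x, x ↦ a*→x⟩ : a ∈ L} of isotone Galois connections on L is closed under composition. -/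
/-!
Monotonicity of the hedge together with `(a → b)* ≤ a* → b*` and idempotence turns the unit
`b* ≤ a* → a* ⊗ b*` of the adjunction into `b* ≤ a* → (a* ⊗ b*)*`, i.e. `a* ⊗ b* ≤ (a* ⊗ b*)*`.
Hence `c := a* ⊗ b*` satisfies `c* = c`, and `⟨a* ⊗ -, a* → -⟩ ∘ ⟨b* ⊗ -, b* → -⟩` has lower
adjoint `c* ⊗ -`; its upper adjoint is then `c* → -` by uniqueness of adjoints.
-/

section Residuated

variable {L : Type*} {mul arr : L → L → L} {star : L → L}

theorem le_iff_top_le_arr [Preorder L] [OrderTop L]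
    (hcomm : ∀ a b : L, mul a b = mul b a) (hone : ∀ a : L, mul ⊤ a = a)
    (hadj : ∀ a b c : L, mul a b ≤ c ↔ b ≤ arr a c) (a b : L) :
    a ≤ b ↔ ⊤ ≤ arr a b := by
  rw [← hadj, hcomm, hone]

theorem monotone_hedge [PartialOrder L] [OrderTop L]
    (hcomm : ∀ a b : L, mul a b = mul b a) (hone : ∀ a : L, mul ⊤ a = a)
    (hadj : ∀ a b c : L, mul a b ≤ c ↔ b ≤ arr a c)
    (hs1 : star ⊤ = ⊤) (hs3 : ∀ a b : L, star (arr a b) ≤ arr (star a) (star b)) :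
    Monotone star := by
  intro a b hab
  have harr : arr a b = ⊤ :=
    top_le_iff.mp ((le_iff_top_le_arr hcomm hone hadj a b).mp hab)
  have h := hs3 a b
  rw [harr, hs1] at h
  exact (le_iff_top_le_arr hcomm hone hadj _ _).mpr h

theorem hedge_mul_hedge_eq [PartialOrder L]
    (hadj : ∀ a b c : L, mul a b ≤ c ↔ b ≤ arr a c) (hmono : Monotone star)
    (hs2 : ∀ a : L, star a ≤ a) (hs3 : ∀ a b : L, star (arr a b) ≤ arr (star a) (star b))
    (hs4 : ∀ a : L, star (star a) = star a) (a b : L) :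
    star (mul (star a) (star b)) = mul (star a) (star b) := by
  refine le_antisymm (hs2 _) ((hadj _ _ _).mpr ?_)
  calc star b = star (star b) := (hs4 b).symm
    _ ≤ star (arr (star a) (mul (star a) (star b))) := hmono ((hadj _ _ _).mp le_rfl)
    _ ≤ arr (star (star a)) (star (mul (star a) (star b))) := hs3 _ _
    _ = arr (star a) (star (mul (star a) (star b))) := by rw [hs4]

theorem arr_arr_eq_arr_mul [PartialOrder L]
    (hassoc : ∀ a b c : L, mul (mul a b) c = mul a (mul b c))
    (hadj : ∀ a b c : L, mul a b ≤ c ↔ b ≤ arr a c) (a b x : L) :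
    arr b (arr a x) = arr (mul a b) x := by
  have hgc : ∀ a, GaloisConnection (mul a) (arr a) := fun a b c => hadj a b c
  exact ((hgc b).compose (hgc a)).u_unique (hgc (mul a b)) fun y => (hassoc a b y).symm

end Residuated

/-- For an idempotent truth-stressing hedge, a* ⊗ b* is a fixed point of the
hedge, hence the parameterization by hedge-multiples is closed under
composition. -/
theorem hedge_mul_fixed_and_closed {L : Type*} [CompleteLattice L]
    (mul arr : L → L → L) (star : L → L)
    (hassoc : ∀ a b c : L, mul (mul a b) c = mul a (mul b c))
    (hcomm : ∀ a b : L, mul a b = mul b a)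
    (hone : ∀ a : L, mul ⊤ a = a)
    (hadj : ∀ a b c : L, mul a b ≤ c ↔ b ≤ arr a c)
    (hs1 : star ⊤ = ⊤)
    (hs2 : ∀ a : L, star a ≤ a)
    (hs3 : ∀ a b : L, star (arr a b) ≤ arr (star a) (star b))
    (hs4 : ∀ a : L, star (star a) = star a) :
    (∀ a b : L, mul (star a) (star b) = star (mul (star a) (star b))) ∧
    (∀ a b : L, ∃ c : L,
      (∀ x : L, mul (star a) (mul (star b) x) = mul (star c) x) ∧
      (∀ x : L, arr (star b) (arr (star a) x) = arr (star c) x)) := by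
  have hfixed := hedge_mul_hedge_eq hadj (monotone_hedge hcomm hone hadj hs1 hs3) hs2 hs3 hs4
  refine ⟨fun a b => (hfixed a b).symm, fun a b => ⟨mul (star a) (star b), fun x => ?_, fun x => ?_⟩⟩
  · rw [hfixed, hassoc]
  · rw [hfixed, arr_arr_eq_arr_mul hassoc hadj]
end
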